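/- arXiv:1206.6114 — 2 statements merged into one kernel-verified Lean document; each statement's English description precedes it below -/
import Mathlib

section
/- There are positive constants v, C₁ and C₂, independent of N, such that for every N ≥ 1 and every ξ ∈ ℕ^N, the Fleming-Viot generator applied to ψ satisfies L^N ψ(ξ) ≤ −v ψ(ξ) + C₁ R²(ξ)/N + C₂, where v = −∑_{ℓ≥−1} ℓ p(ℓ+1) is the subcritical drift of the driving Galton-Watson process. -/
open MeasureTheory Filter Topology Set

noncomputable section

/-- Jump rates of the continuous-time Galton-Watson process: from `x ≥ 1`,
jump to `x - 1` at rate `x p(0)` and to `y > x` at rate `x p(y - x + 1)`;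
the state `0` is absorbing. -/
def gwRate (p : ℕ → ℝ) (x y : ℕ) : ℝ :=
  if 1 ≤ x ∧ y + 1 = x then (x : ℝ) * p 0
  else if 1 ≤ x ∧ x < y then (x : ℝ) * p (y - x + 1)
  else 0

/-- The offspring law: a probability on ℕ with a finite positive exponential
moment and negative (subcritical) drift `-v = ∑_{ℓ ≥ -1} ℓ p(ℓ+1) < 0`. -/
structure OffspringLaw (p : ℕ → ℝ) (σ v : ℝ) : Prop where
  nonneg : ∀ k, 0 ≤ p k
  total : ∑' k : ℕ, p k = 1
  sigma_pos : 0 < σ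
  expMoment : Summable fun k : ℕ => p k * Real.exp (σ * k)
  v_pos : 0 < v
  drift : ∑' k : ℕ, ((k : ℝ) - 1) * p k = -v

/-- Empirical distribution of an `N`-particle configuration. -/
def emp (N : ℕ) (x : ℕ) (ξ : Fin N → ℕ) : ℝ :=
  (N : ℝ)⁻¹ * ∑ i : Fin N, (if ξ i = x then (1 : ℝ) else 0)

/-- Fleming-Viot generator for general driving rates `q`. -/
def fvGenQ (q : ℕ → ℕ → ℝ) (N : ℕ) (f : (Fin N → ℕ) → ℝ) (ξ : Fin N → ℕ) : ℝ :=
  ∑ i : Fin N, ∑' y : ℕ,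
    (if 1 ≤ y then
        q (ξ i) y + q (ξ i) 0 * ((N : ℝ) / ((N : ℝ) - 1)) * emp N y ξ
      else 0) * (f (Function.update ξ i y) - f ξ)

/-- Fleming-Viot generator driven by the Galton-Watson rates. -/
def fvGen (p : ℕ → ℝ) (N : ℕ) : ((Fin N → ℕ) → ℝ) → (Fin N → ℕ) → ℝ :=
  fvGenQ (gwRate p) N

/-- Bounded real observables. -/
def Bounded {S : Type*} (f : S → ℝ) : Prop := ∃ C, ∀ x, |f x| ≤ C

/-- A Markov transition semigroup on a measurable state space. -/
structure MarkovSemigroup (S : Type*) [MeasurableSpace S] where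
  P : ℝ → S → Measure S
  meas : ∀ t, Measurable (P t)
  prob : ∀ t x, IsProbabilityMeasure (P t x)
  init : ∀ x, P 0 x = Measure.dirac x
  semigroup : ∀ s t : ℝ, 0 ≤ s → 0 ≤ t → ∀ x, P (s + t) x = (P s x).bind (P t)

/-- `K` is the transition semigroup of the `N`-particle Fleming-Viot process
driven by the rates `q`: it solves the Kolmogorov equation for the
Fleming-Viot generator on bounded observables. -/
def IsFVQSemigroup (q : ℕ → ℕ → ℝ) (N : ℕ) (K : MarkovSemigroup (Fin N → ℕ)) : Prop :=
  ∀ f : (Fin N → ℕ) → ℝ, Bounded f → Measurable f → ∀ ξ, ∀ t : ℝ, 0 ≤ t →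
    HasDerivWithinAt (fun u => ∫ η, f η ∂ K.P u ξ)
      (∫ η, fvGenQ q N f η ∂ K.P t ξ) (Set.Ici 0) t

/-- `K` is the `N`-particle Fleming-Viot semigroup driven by Galton-Watson. -/
def IsFVSemigroup (p : ℕ → ℝ) (N : ℕ) (K : MarkovSemigroup (Fin N → ℕ)) : Prop :=
  IsFVQSemigroup (gwRate p) N K

/-- Invariant (stationary) measure of a Markov semigroup. -/
def Invariant {S : Type*} [MeasurableSpace S] (K : MarkovSemigroup S) (μ : Measure S) : Prop :=
  ∀ t : ℝ, 0 ≤ t → μ.bind (K.P t) = μ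

/-- Transition probabilities of the Galton-Watson process (absorbed at 0),
characterized by the Kolmogorov backward equations. -/
structure GWTransition (p : ℕ → ℝ) where
  pt : ℝ → ℕ → ℕ → ℝ
  nonneg : ∀ t x y, 0 ≤ pt t x y
  total : ∀ t x, 0 ≤ t → ∑' y : ℕ, pt t x y = 1
  init : ∀ x y, pt 0 x y = if y = x then 1 else 0
  backward : ∀ x y, ∀ t : ℝ, 0 ≤ t →
    HasDerivWithinAt (fun s => pt s x y)
      (∑' z : ℕ, gwRate p x z * (pt t z y - pt t x y)) (Set.Ici 0) t

/-- The law at time `t` of the process started from `μ`, conditioned on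
non-absorption up to time `t`. -/
def condLaw (pt : ℝ → ℕ → ℕ → ℝ) (μ : ℕ → ℝ) (t : ℝ) (y : ℕ) : ℝ :=
  (∑' x : ℕ, μ x * pt t x y) /
    ∑' x : ℕ, ∑' z : ℕ, (if 1 ≤ z then μ x * pt t x z else 0)

def diracOne : ℕ → ℝ := fun x => if x = 1 then 1 else 0

/-- `ν` is the Yaglom limit (the minimal quasi-stationary distribution). -/
def IsYaglomLimit (pt : ℝ → ℕ → ℕ → ℝ) (ν : ℕ → ℝ) : Prop :=
  ∀ y : ℕ, Tendsto (fun t => condLaw pt diracOne t y) atTop (𝓝 (ν y))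

/-- Position of the rightmost particle. -/
def rmax (N : ℕ) (ξ : Fin N → ℕ) : ℕ := Finset.univ.sup ξ

/-- Ratio of the second to the first empirical moment. -/
def psiFun (N : ℕ) (ξ : Fin N → ℕ) : ℝ :=
  (∑ i : Fin N, (ξ i : ℝ) ^ 2) / ∑ i : Fin N, (ξ i : ℝ)

/-- Configurations of the multitype branching process: `ζ (i, x)` is the
number of type-`i` individuals at site `x`. -/
abbrev BConf (N : ℕ) := Fin N × ℕ → ℕ

/-- Total number of individuals. -/
def bTotal (N : ℕ) (ζ : BConf N) : ENNReal := ∑' w : Fin N × ℕ, (ζ w : ENNReal)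

/-- Rightmost occupied site. -/
def bRmax (N : ℕ) (ζ : BConf N) : ℕ := sSup {x : ℕ | ∃ i, ζ (i, x) ≠ 0}

/-- Move one type-`i` individual from `x` to `y`. -/
def bJump (N : ℕ) (ζ : BConf N) (i : Fin N) (x y : ℕ) : BConf N :=
  fun w => if w = (i, x) then ζ w - 1 else if w = (i, y) then ζ w + 1 else ζ w

/-- Every type-`j` individual gives birth to a type-`i` individual at its own
position. -/
def bBranch (N : ℕ) (ζ : BConf N) (i j : Fin N) : BConf N :=
  fun w => if w.1 = i then ζ w + ζ (j, w.2) else ζ w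

/-- Generator of the multitype branching Markov process. -/
def branchGen (q : ℕ → ℕ → ℝ) (qbar : ℝ) (N : ℕ) (f : BConf N → ℝ) (ζ : BConf N) : ℝ :=
  (∑' w : (Fin N × ℕ) × ℕ,
      (ζ w.1 : ℝ) * (if w.2 ≠ 0 ∧ w.2 ≠ w.1.2 then q w.1.2 w.2 else 0) *
        (f (bJump N ζ w.1.1 w.1.2 w.2) - f ζ))
    + ∑ i : Fin N, ∑ j : Fin N,
        (if j ≠ i then qbar / ((N : ℝ) - 1) * (f (bBranch N ζ i j) - f ζ) else 0)

def IsBranchSemigroup (q : ℕ → ℕ → ℝ) (qbar : ℝ) (N : ℕ)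
    (B : MarkovSemigroup (BConf N)) : Prop :=
  ∀ f : BConf N → ℝ, Bounded f → Measurable f → ∀ ζ, ∀ t : ℝ, 0 ≤ t →
    HasDerivWithinAt (fun u => ∫ η, f η ∂ B.P u ζ)
      (∫ η, branchGen q qbar N f η ∂ B.P t ζ) (Set.Ici 0) t

/-- Generator of the single-particle motion with jumps to `0` suppressed. -/
def tildeGen (q : ℕ → ℕ → ℝ) (f : ℕ → ℝ) (x : ℕ) : ℝ :=
  ∑' y : ℕ, (if y ≠ 0 ∧ y ≠ x then q x y else 0) * (f y - f x)

def IsTildeSemigroup (q : ℕ → ℕ → ℝ) (T : MarkovSemigroup ℕ) : Prop :=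
  ∀ f : ℕ → ℝ, Bounded f → ∀ x, ∀ t : ℝ, 0 ≤ t →
    HasDerivWithinAt (fun u => ∫ y, f y ∂ T.P u x)
      (∫ y, tildeGen q f y ∂ T.P t x) (Set.Ici 0) t

/-- Generator of the Galton-Watson process together with its cumulative birth
counter: from `(z, b)`, jump to `(z + k - 1, b + k)` at rate `z p(k)`. -/
def gwbGen (p : ℕ → ℝ) (f : ℕ × ℕ → ℝ) (w : ℕ × ℕ) : ℝ :=
  ∑' k : ℕ, (w.1 : ℝ) * p k * (f (w.1 + k - 1, w.2 + k) - f w)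

def IsGWBSemigroup (p : ℕ → ℝ) (W : MarkovSemigroup (ℕ × ℕ)) : Prop :=
  ∀ f : ℕ × ℕ → ℝ, Bounded f → ∀ w, ∀ t : ℝ, 0 ≤ t →
    HasDerivWithinAt (fun u => ∫ z, f z ∂ W.P u w)
      (∫ z, gwbGen p f z ∂ W.P t w) (Set.Ici 0) t

/-- `E[exp(σ' H¹)] < ∞`, where `H¹ = 1 + (total number of births)` of the
Galton-Watson process started from one individual; the total number of births
is the increasing limit of the birth counter. -/
def HMomentFinite (W : MarkovSemigroup (ℕ × ℕ)) (σ' : ℝ) : Prop :=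
  ∃ M : ℝ, ∀ t : ℝ, 0 ≤ t →
    ∫⁻ w, ENNReal.ofReal (Real.exp (σ' * (1 + (w.2 : ℝ)))) ∂ W.P t (1, 0)
      ≤ ENNReal.ofReal M

/-- The class `F` of test functions: `∑_ℓ e^{-ρℓ} |f(ℓ)| < ∞` for some `ρ < σ'`. -/
def MemF (σ' : ℝ) (f : ℕ → ℝ) : Prop :=
  ∃ ρ : ℝ, ρ < σ' ∧ Summable fun ℓ : ℕ => Real.exp (-ρ * ℓ) * |f ℓ|

/-- Galton-Watson semigroup `S_t f(x) = E f(Z^x_t)`, read off from the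
birth-counting process. -/
def gwS (W : MarkovSemigroup (ℕ × ℕ)) (t : ℝ) (f : ℕ → ℝ) (x : ℕ) : ℝ :=
  ∫ w, f w.1 ∂ W.P t (x, 0)

/-- Galton-Watson generator `Q f(x) = ∑_{ℓ ≥ -1} x p(ℓ+1) (f(x+ℓ) - f(x))`. -/
def gwQ (p : ℕ → ℝ) (f : ℕ → ℝ) (x : ℕ) : ℝ :=
  ∑' k : ℕ, (x : ℝ) * p k * (f (x + k - 1) - f x)

/-- Reflected Galton-Watson generator
`Q̃ f(x) = ∑_{ℓ ≥ -1} x p(ℓ+1) 1{x+ℓ ≥ 1} (f(x+ℓ) - f(x))`. -/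
def gwQRefl (p : ℕ → ℝ) (f : ℕ → ℝ) (x : ℕ) : ℝ :=
  ∑' k : ℕ, (x : ℝ) * p k * (if 1 ≤ x + k - 1 then f (x + k - 1) - f x else 0)

def IsReflSemigroup (p : ℕ → ℝ) (R : MarkovSemigroup ℕ) : Prop :=
  ∀ f : ℕ → ℝ, Bounded f → ∀ x, ∀ t : ℝ, 0 ≤ t →
    HasDerivWithinAt (fun u => ∫ y, f y ∂ R.P u x)
      (∫ y, gwQRefl p f y ∂ R.P t x) (Set.Ici 0) t

/-- `Γ(ρ) = p(0) + ∑_{ℓ ≥ 1} p(ℓ+1) ℓ² e^{ρℓ}`. -/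
def gwGamma (p : ℕ → ℝ) (ρ : ℝ) : ℝ :=
  p 0 + ∑' ℓ : ℕ, p (ℓ + 2) * ((ℓ : ℝ) + 1) ^ 2 * Real.exp (ρ * ((ℓ : ℝ) + 1))

/-- `β = sup {ρ > 0 : ρ Γ(ρ) ≤ v}`. -/
def gwBeta (p : ℕ → ℝ) (v : ℝ) : ℝ :=
  sSup {ρ : ℝ | 0 < ρ ∧ ρ * gwGamma p ρ ≤ v}

/-- Generating function `G(μ; z) = ∑_x μ(x) z^x`. -/
def genFn (μ : ℕ → ℝ) (z : ℝ) : ℝ := ∑' x : ℕ, μ x * z ^ x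

/-- A probability distribution on the positive integers. -/
def IsProbOnPos (μ : ℕ → ℝ) : Prop :=
  (∀ x, 0 ≤ μ x) ∧ μ 0 = 0 ∧ ∑' x : ℕ, μ x = 1

/-- The class `K(α)`: probabilities on ℕ whose second-to-first moment ratio
is at most `α`. -/
def InK (α : ℝ) (μ : ℕ → ℝ) : Prop :=
  IsProbOnPos μ ∧ (Summable fun x : ℕ => (x : ℝ) ^ 2 * μ x) ∧
    (∑' x : ℕ, (x : ℝ) ^ 2 * μ x) ≤ α * ∑' x : ℕ, (x : ℝ) * μ x

/-!
With `S = ∑ ξ(i)`, `T = ∑ ξ(i)²` and `ψ = T / S`, moving a particle from `x` to `y` changes `ψ`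
by `(y - x)(x + y - ψ) / (S + y - x)`. Replacing `1 / (S + y - x)` by `1 / S` costs at most
`2 (y - x)² ψ / S²`, so every jump is dominated by a quadratic in `y - x`, on which the
Galton-Watson rates act through the drift `-v` and the second moment of the jumps. Summed over the
particles, the linear part contributes `-v ∑ x (2x - ψ) / S = -v (2T - ψS) / S = -v ψ`. A particle
at `1` is resampled instead of absorbed; since `∑ (ξ(j) - 1)(ξ(j) + 1 - ψ) = N (ψ - 1)`, the
empirical average of the linear part equals its value at the absorbing jump, so resampling only
adds `O(ψ² / (N S)) = O(R² / N)`.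
-/

lemma summable_pow_mul_of_summable_mul_exp {p : ℕ → ℝ} {σ : ℝ} (hσ : 0 < σ)
    (hp : ∀ k, 0 ≤ p k) (hexp : Summable fun k : ℕ => p k * Real.exp (σ * k)) (n : ℕ) :
    Summable fun k : ℕ => (k : ℝ) ^ n * p k := by
  refine .of_nonneg_of_le (fun k => mul_nonneg (by positivity) (hp k)) (fun k => ?_)
    (hexp.mul_left (n.factorial / σ ^ n))
  have h := Real.pow_div_factorial_le_exp (σ * k) (by positivity) n
  rw [div_le_iff₀ (by positivity), mul_pow] at h
  have h' : (k : ℝ) ^ n ≤ n.factorial / σ ^ n * Real.exp (σ * k) := by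
    rw [div_mul_eq_mul_div, le_div_iff₀ (by positivity)]
    linarith
  calc (k : ℝ) ^ n * p k ≤ n.factorial / σ ^ n * Real.exp (σ * k) * p k :=
        mul_le_mul_of_nonneg_right h' (hp k)
    _ = _ := by ring

def jumpSecondMoment (p : ℕ → ℝ) : ℝ := ∑' k : ℕ, ((k : ℝ) - 1) ^ 2 * p k

namespace OffspringLaw

variable {p : ℕ → ℝ} {σ v : ℝ}

lemma summable_pow_mul (hp : OffspringLaw p σ v) (n : ℕ) :
    Summable fun k : ℕ => (k : ℝ) ^ n * p k :=
  summable_pow_mul_of_summable_mul_exp hp.sigma_pos hp.nonneg hp.expMoment n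

lemma hasSum_jump (hp : OffspringLaw p σ v) :
    HasSum (fun k : ℕ => ((k : ℝ) - 1) * p k) (-v) := by
  rw [← hp.drift]
  refine Summable.hasSum ?_
  simpa [sub_mul] using (hp.summable_pow_mul 1).sub (hp.summable_pow_mul 0)

lemma hasSum_jump_sq (hp : OffspringLaw p σ v) :
    HasSum (fun k : ℕ => ((k : ℝ) - 1) ^ 2 * p k) (jumpSecondMoment p) := by
  refine Summable.hasSum ?_
  have h := ((hp.summable_pow_mul 2).sub ((hp.summable_pow_mul 1).mul_left 2)).add
    (hp.summable_pow_mul 0)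
  refine h.congr fun k => ?_
  ring

lemma jumpSecondMoment_nonneg (hp : OffspringLaw p σ v) : 0 ≤ jumpSecondMoment p :=
  tsum_nonneg fun k => mul_nonneg (sq_nonneg _) (hp.nonneg k)

end OffspringLaw

lemma div_add_sub_le {S ψ d a : ℝ} (hS : 0 < S) (hSd : S ≤ 2 * (S + d)) (ha : 0 ≤ a)
    (hψ : 0 ≤ ψ) :
    (ψ * S + d * a) / (S + d) - ψ ≤ d * (a - ψ) / S + 2 * d ^ 2 * ψ / S ^ 2 := by
  have hSd' : 0 < S + d := by linarith
  have hgap : d * (a - ψ) / S + 2 * d ^ 2 * ψ / S ^ 2 - ((ψ * S + d * a) / (S + d) - ψ)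
      = d ^ 2 * (a * S + ψ * (S + 2 * d)) / (S ^ 2 * (S + d)) := by
    field_simp
    ring
  have : 0 ≤ d ^ 2 * (a * S + ψ * (S + 2 * d)) / (S ^ 2 * (S + d)) := by
    apply div_nonneg _ (by positivity)
    exact mul_nonneg (sq_nonneg d) (add_nonneg (by positivity) (mul_nonneg hψ (by linarith)))
  linarith

def centeredQuad (x : ℕ) (a b : ℝ) (y : ℕ) : ℝ := a * ((y : ℝ) - x) + b * ((y : ℝ) - x) ^ 2

section Configuration

variable {N : ℕ} (ξ : Fin N → ℕ)

def totalMass : ℝ := ∑ j, (ξ j : ℝ)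

/-- The change of `psiFun N ξ` when a particle jumps from `x` to `y`, linearized in
`1 / totalMass ξ`, plus a bound for the quadratic error. -/
def psiLin (x : ℕ) : ℕ → ℝ :=
  centeredQuad x ((2 * x - psiFun N ξ) / totalMass ξ)
    (1 / totalMass ξ + 2 * psiFun N ξ / totalMass ξ ^ 2)

lemma sum_comp_update (g : ℕ → ℝ) (i : Fin N) (y : ℕ) :
    ∑ j, g (Function.update ξ i y j) = ∑ j, g (ξ j) + (g y - g (ξ i)) := by
  classical
  have hupd : ∀ j ∈ Finset.univ.erase i, g (Function.update ξ i y j) = g (ξ j) := fun j hj =>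
    by rw [Function.update_of_ne (Finset.ne_of_mem_erase hj)]
  rw [← Finset.sum_erase_add _ _ (Finset.mem_univ i), Finset.sum_congr rfl hupd,
    ← Finset.sum_erase_add _ _ (Finset.mem_univ i), Function.update_self]
  ring

lemma le_totalMass (i : Fin N) : (ξ i : ℝ) ≤ totalMass ξ :=
  Finset.single_le_sum (f := fun j => (ξ j : ℝ)) (fun j _ => by positivity) (Finset.mem_univ i)

lemma card_le_totalMass (hξ : ∀ j, 1 ≤ ξ j) : (N : ℝ) ≤ totalMass ξ := by
  calc (N : ℝ) = ∑ _j : Fin N, (1 : ℝ) := by simp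
    _ ≤ totalMass ξ := Finset.sum_le_sum fun j _ => by exact_mod_cast hξ j

lemma sum_sq_eq_psiFun_mul (hS : totalMass ξ ≠ 0) :
    ∑ j, (ξ j : ℝ) ^ 2 = psiFun N ξ * totalMass ξ := by
  rw [psiFun, ← totalMass, div_mul_cancel₀ _ hS]

lemma psiFun_nonneg : 0 ≤ psiFun N ξ := by
  unfold psiFun
  positivity

lemma one_le_psiFun (hξ : ∀ j, 1 ≤ ξ j) (hS : 0 < totalMass ξ) : 1 ≤ psiFun N ξ := by
  rw [psiFun, ← totalMass, one_le_div hS]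
  refine Finset.sum_le_sum fun j _ => ?_
  have h1 : (1 : ℝ) ≤ ξ j := by exact_mod_cast hξ j
  nlinarith

lemma psiFun_le_rmax : psiFun N ξ ≤ rmax N ξ := by
  refine div_le_of_le_mul₀ (by positivity) (by positivity) ?_
  rw [Finset.mul_sum]
  refine Finset.sum_le_sum fun j _ => ?_
  have hj : (ξ j : ℝ) ≤ rmax N ξ := by exact_mod_cast Finset.le_sup (f := ξ) (Finset.mem_univ j)
  nlinarith [Nat.cast_nonneg (α := ℝ) (ξ j)]

lemma psiFun_update (hS : totalMass ξ ≠ 0) (i : Fin N) (y : ℕ) :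
    psiFun N (Function.update ξ i y)
      = (psiFun N ξ * totalMass ξ + ((y : ℝ) - ξ i) * (ξ i + y))
        / (totalMass ξ + ((y : ℝ) - ξ i)) := by
  rw [← sum_sq_eq_psiFun_mul ξ hS, psiFun, totalMass,
    sum_comp_update ξ (fun n => (n : ℝ) ^ 2), sum_comp_update ξ (fun n => (n : ℝ))]
  ring_nf

lemma sum_mul_psiLin_coeffs (hS : totalMass ξ ≠ 0) (v M : ℝ) :
    ∑ i, (ξ i : ℝ) * (-v * ((2 * ξ i - psiFun N ξ) / totalMass ξ)
        + M * (1 / totalMass ξ + 2 * psiFun N ξ / totalMass ξ ^ 2))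
      = -v * psiFun N ξ + M * (1 + 2 * psiFun N ξ / totalMass ξ) := by
  have hT := sum_sq_eq_psiFun_mul ξ hS
  have hterm : ∀ i, (ξ i : ℝ) * (-v * ((2 * ξ i - psiFun N ξ) / totalMass ξ)
        + M * (1 / totalMass ξ + 2 * psiFun N ξ / totalMass ξ ^ 2))
      = -2 * v / totalMass ξ * (ξ i : ℝ) ^ 2
        + (v * psiFun N ξ / totalMass ξ + M * (1 / totalMass ξ + 2 * psiFun N ξ / totalMass ξ ^ 2))
          * ξ i := fun i => by ring
  rw [Finset.sum_congr rfl fun i _ => hterm i, Finset.sum_add_distrib, ← Finset.mul_sum,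
    ← Finset.mul_sum, hT, ← totalMass]
  field_simp
  ring

lemma psiFun_sq_div_totalMass_le (hξ : ∀ j, 1 ≤ ξ j) (hN : 1 ≤ N) :
    psiFun N ξ ^ 2 / totalMass ξ ≤ (rmax N ξ : ℝ) ^ 2 / N := by
  have hN' : (0 : ℝ) < N := by exact_mod_cast hN
  exact div_le_div₀ (by positivity) (pow_le_pow_left₀ (psiFun_nonneg ξ) (psiFun_le_rmax ξ) 2)
    hN' (card_le_totalMass ξ hξ)

variable {ξ}

lemma psiFun_update_sub_le (hξ : ∀ j, 1 ≤ ξ j) (i : Fin N) {y : ℕ} (hy : 1 ≤ y)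
    (hxy : ξ i ≤ y + 1) :
    psiFun N (Function.update ξ i y) - psiFun N ξ ≤ psiLin ξ (ξ i) y := by
  have hxS := le_totalMass ξ i
  have hx : (1 : ℝ) ≤ ξ i := by exact_mod_cast hξ i
  have hy' : (1 : ℝ) ≤ y := by exact_mod_cast hy
  have hxy' : (ξ i : ℝ) ≤ y + 1 := by exact_mod_cast hxy
  have hS : 0 < totalMass ξ := by linarith
  rw [psiFun_update ξ hS.ne']
  refine (div_add_sub_le hS (by linarith) (by positivity) (psiFun_nonneg ξ)).trans_eq ?_
  rw [psiLin, centeredQuad]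
  ring

lemma neg_mul_sq_le_psiFun_update_sub (i : Fin N) (y : ℕ) :
    centeredQuad (ξ i) 0 (-psiFun N ξ) y ≤ psiFun N (Function.update ξ i y) - psiFun N ξ := by
  rcases eq_or_ne y (ξ i) with rfl | hne
  · simp [centeredQuad]
  have hsq : 1 ≤ ((y : ℝ) - ξ i) ^ 2 := by
    rcases Nat.lt_or_gt_of_ne hne with h | h
    · have h' : (y : ℝ) + 1 ≤ ξ i := by exact_mod_cast h
      nlinarith
    · have h' : (ξ i : ℝ) + 1 ≤ y := by exact_mod_cast h
      nlinarith
  have := psiFun_nonneg (Function.update ξ i y)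
  have := psiFun_nonneg ξ
  simp only [centeredQuad]
  nlinarith

end Configuration

section Rates

variable {p : ℕ → ℝ}

lemma gwRate_nonneg (hp : ∀ k, 0 ≤ p k) (x y : ℕ) : 0 ≤ gwRate p x y := by
  unfold gwRate
  split_ifs <;> first | exact le_rfl | exact mul_nonneg (Nat.cast_nonneg _) (hp _)

lemma gwRate_zero_right (x : ℕ) : gwRate p x 0 = if x = 1 then p 0 else 0 := by
  unfold gwRate
  split_ifs <;> simp_all

lemma gwRate_eq_zero_of_add_one_lt {x y : ℕ} (h : y + 1 < x) : gwRate p x y = 0 := by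
  unfold gwRate
  rw [if_neg (by omega), if_neg (by omega)]

lemma gwRate_add_sub_one {x k : ℕ} (hx : 1 ≤ x) (hk : k ≠ 1) :
    gwRate p x (x + k - 1) = x * p k := by
  unfold gwRate
  split_ifs with h1 h2
  · rw [show k = 0 by omega]
  · rw [show x + k - 1 - x + 1 = k by omega]
  · omega

/-- A Galton-Watson jump from `x ≥ 1` is `x ↦ x + k - 1`, with `k` distributed as `p`. -/
lemma hasSum_gwRate_mul_sub {x : ℕ} (hx : 1 ≤ x) {h : ℕ → ℝ} {s : ℝ}
    (hs : HasSum (fun k => x * p k * (h (x + k - 1) - h x)) s) :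
    HasSum (fun y => gwRate p x y * (h y - h x)) s := by
  have hinj : Function.Injective fun k => x + k - 1 := fun a b hab => by
    simp only at hab
    omega
  refine (hinj.hasSum_iff fun y hy => ?_).mp (hs.congr_fun fun k => ?_)
  · rw [gwRate_eq_zero_of_add_one_lt, zero_mul]
    by_contra hlt
    exact hy ⟨y + 1 - x, by simp only; omega⟩
  · rcases eq_or_ne k 1 with rfl | hk
    · simp
    · simp only [Function.comp_apply, gwRate_add_sub_one hx hk]

end Rates

section Empirical

variable {N : ℕ}

lemma emp_nonneg (y : ℕ) (ξ : Fin N → ℕ) : 0 ≤ emp N y ξ := by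
  unfold emp
  refine mul_nonneg (by positivity) (Finset.sum_nonneg fun j _ => ?_)
  split_ifs <;> norm_num

lemma emp_zero_left {ξ : Fin N → ℕ} (hξ : ∀ j, 1 ≤ ξ j) : emp N 0 ξ = 0 := by
  unfold emp
  rw [Finset.sum_eq_zero fun j _ => if_neg (by have := hξ j; omega), mul_zero]

lemma hasSum_emp_mul (ξ : Fin N → ℕ) (f : ℕ → ℝ) :
    HasSum (fun y => emp N y ξ * f y) ((N : ℝ)⁻¹ * ∑ j, f (ξ j)) := by
  have h : HasSum (fun y => ∑ j, if y = ξ j then f (ξ j) else 0) (∑ j, f (ξ j)) :=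
    hasSum_sum fun j _ => hasSum_ite_eq (ξ j) (f (ξ j))
  refine (h.mul_left (N : ℝ)⁻¹).congr_fun fun y => ?_
  simp only [emp, mul_assoc, Finset.sum_mul]
  congr 2 with j
  split_ifs with h1 h2 h2 <;> simp_all

end Empirical

lemma natCast_div_natCast_sub_one_nonneg (n : ℕ) : 0 ≤ (n : ℝ) / ((n : ℝ) - 1) := by
  rcases n with _ | n
  · simp
  · push_cast
    exact div_nonneg (by positivity) (by simp)

/-- For `n = 1` the left-hand side is the junk value `1 / 0 = 0`. -/
lemma natCast_div_natCast_sub_one_le (n : ℕ) : (n : ℝ) / ((n : ℝ) - 1) ≤ 1 + 2 / n := by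
  rcases Nat.lt_or_ge n 2 with hn | hn
  · interval_cases n <;> norm_num
  · have hn' : (2 : ℝ) ≤ n := by exact_mod_cast hn
    rw [div_le_iff₀ (by linarith)]
    have : 2 / (n : ℝ) * ((n : ℝ) - 1) = 2 - 2 / n := by field_simp
    have : 2 / (n : ℝ) ≤ 1 := by rw [div_le_one (by linarith)]; linarith
    nlinarith

section FlemingViot

variable {p : ℕ → ℝ} {σ v : ℝ} {N : ℕ} {ξ : Fin N → ℕ}

def fvRate (p : ℕ → ℝ) (N : ℕ) (ξ : Fin N → ℕ) (i : Fin N) (y : ℕ) : ℝ :=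
  if 1 ≤ y then
    gwRate p (ξ i) y + gwRate p (ξ i) 0 * ((N : ℝ) / ((N : ℝ) - 1)) * emp N y ξ
  else 0

lemma fvGen_eq (f : (Fin N → ℕ) → ℝ) :
    fvGen p N f ξ = ∑ i, ∑' y, fvRate p N ξ i y * (f (Function.update ξ i y) - f ξ) :=
  rfl

lemma fvRate_nonneg (hp : ∀ k, 0 ≤ p k) (i : Fin N) (y : ℕ) : 0 ≤ fvRate p N ξ i y := by
  unfold fvRate
  split_ifs
  · have := natCast_div_natCast_sub_one_nonneg N
    have := emp_nonneg y ξ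
    have := gwRate_nonneg hp (ξ i) y
    have := gwRate_nonneg hp (ξ i) 0
    positivity
  · exact le_rfl

lemma fvRate_eq_zero_of_add_one_lt {i : Fin N} {y : ℕ} (h : y + 1 < ξ i) :
    fvRate p N ξ i y = 0 := by
  unfold fvRate
  rw [gwRate_eq_zero_of_add_one_lt h, gwRate_zero_right, if_neg (show ξ i ≠ 1 by omega)]
  simp

/-- The second term accounts for the resampling that replaces the jump to `0`. -/
lemma hasSum_fvRate_mul_centeredQuad (hp : OffspringLaw p σ v) (hξ : ∀ j, 1 ≤ ξ j)
    (i : Fin N) (a b : ℝ) :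
    HasSum (fun y => fvRate p N ξ i y * centeredQuad (ξ i) a b y)
      (ξ i * (-v * a + jumpSecondMoment p * b)
        + gwRate p (ξ i) 0 * ((N : ℝ) / ((N : ℝ) - 1)
            * ((N : ℝ)⁻¹ * ∑ j, centeredQuad (ξ i) a b (ξ j))
          - centeredQuad (ξ i) a b 0)) := by
  set x := ξ i
  set Q := centeredQuad x a b
  have hQx : Q x = 0 := by simp [Q, centeredQuad]
  have hx : 1 ≤ x := hξ i
  have hjumps : HasSum (fun k => x * p k * (Q (x + k - 1) - Q x))
      (x * (-v * a + jumpSecondMoment p * b)) := by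
    rw [show (x : ℝ) * (-v * a + jumpSecondMoment p * b)
      = x * (a * -v + b * jumpSecondMoment p) by ring]
    refine (((hp.hasSum_jump.mul_left a).add (hp.hasSum_jump_sq.mul_left b)).mul_left
      (x : ℝ)).congr_fun fun k => ?_
    have hcast : ((x + k - 1 : ℕ) : ℝ) = x + k - 1 := by
      rw [Nat.cast_sub (by omega)]
      push_cast
      ring
    simp only [Q, centeredQuad, hcast]
    ring
  have hgw := (hasSum_gwRate_mul_sub hx hjumps).update 0 0
  have hres := (hasSum_emp_mul ξ Q).mul_left (gwRate p x 0 * ((N : ℝ) / ((N : ℝ) - 1)))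
  rw [show (x : ℝ) * (-v * a + jumpSecondMoment p * b) + gwRate p x 0 * ((N : ℝ) / ((N : ℝ) - 1)
      * ((N : ℝ)⁻¹ * ∑ j, Q (ξ j)) - Q 0) = 0 - gwRate p x 0 * (Q 0 - Q x)
      + x * (-v * a + jumpSecondMoment p * b)
      + gwRate p x 0 * ((N : ℝ) / ((N : ℝ) - 1)) * ((N : ℝ)⁻¹ * ∑ j, Q (ξ j)) by rw [hQx]; ring]
  refine (hgw.add hres).congr_fun fun y => ?_
  rcases Nat.eq_zero_or_pos y with rfl | (hy : 1 ≤ y)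
  · simp [fvRate, emp_zero_left hξ]
  · rw [Function.update_of_ne (by omega), fvRate, if_pos hy, hQx]
    ring

lemma le_psiLin_one_zero (hS : 0 < totalMass ξ) :
    (psiFun N ξ - 1) / totalMass ξ ≤ psiLin ξ 1 0 := by
  have : 0 ≤ 2 * psiFun N ξ / totalMass ξ ^ 2 := div_nonneg (by linarith [psiFun_nonneg ξ])
    (by positivity)
  simp only [psiLin, centeredQuad]
  have h : ((2 * ((1 : ℕ) : ℝ) - psiFun N ξ) / totalMass ξ) * (((0 : ℕ) : ℝ) - (1 : ℕ))
      + (1 / totalMass ξ + 2 * psiFun N ξ / totalMass ξ ^ 2) * (((0 : ℕ) : ℝ) - (1 : ℕ)) ^ 2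
      = (psiFun N ξ - 1) / totalMass ξ + 2 * psiFun N ξ / totalMass ξ ^ 2 := by
    push_cast
    ring
  linarith

/-- Averaged over the empirical measure, the linear part of `psiLin ξ 1` equals its value at `0`:
this is what makes resampling at rate `p 0` mimic the absorbed jump to `0`. -/
lemma avg_psiLin_one_le (hξ : ∀ j, 1 ≤ ξ j) (hN : 1 ≤ N) :
    (N : ℝ)⁻¹ * ∑ j, psiLin ξ 1 (ξ j)
      ≤ (psiFun N ξ - 1) / totalMass ξ + 2 * psiFun N ξ ^ 2 / (N * totalMass ξ) := by
  set S := totalMass ξ with hSdef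
  set ψ := psiFun N ξ with hψdef
  have hN' : (1 : ℝ) ≤ N := by exact_mod_cast hN
  have hS : 0 < S := by linarith [card_le_totalMass ξ hξ]
  have hT := sum_sq_eq_psiFun_mul ξ hS.ne'
  have hterm : ∀ j, psiLin ξ 1 (ξ j)
      = ((ξ j : ℝ) ^ 2 - ψ * ξ j + ψ - 1) / S + 2 * ψ / S ^ 2 * ((ξ j : ℝ) - 1) ^ 2 := by
    intro j
    simp only [psiLin, centeredQuad, Nat.cast_one, ← hSdef, ← hψdef]
    field_simp
    ring
  have hlin : ∑ j, ((ξ j : ℝ) ^ 2 - ψ * ξ j + ψ - 1) / S = N * (ψ - 1) / S := by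
    rw [← Finset.sum_div]
    simp only [Finset.sum_sub_distrib, Finset.sum_add_distrib, ← Finset.mul_sum, hT,
      Finset.sum_const, Finset.card_univ, Fintype.card_fin, nsmul_eq_mul]
    rw [← totalMass]
    ring
  have hquad : ∑ j, ((ξ j : ℝ) - 1) ^ 2 ≤ ψ * S := by
    rw [← hT]
    refine Finset.sum_le_sum fun j _ => ?_
    have : (1 : ℝ) ≤ ξ j := by exact_mod_cast hξ j
    nlinarith
  rw [Finset.sum_congr rfl fun j _ => hterm j, Finset.sum_add_distrib, hlin, ← Finset.mul_sum]
  have hψ : 0 ≤ ψ := psiFun_nonneg ξ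
  have := mul_le_mul_of_nonneg_left hquad (by positivity : 0 ≤ 2 * ψ / S ^ 2)
  calc (N : ℝ)⁻¹ * (N * (ψ - 1) / S + 2 * ψ / S ^ 2 * ∑ j, ((ξ j : ℝ) - 1) ^ 2)
      ≤ (N : ℝ)⁻¹ * (N * (ψ - 1) / S + 2 * ψ / S ^ 2 * (ψ * S)) := by gcongr
    _ = (ψ - 1) / S + 2 * ψ ^ 2 / (N * S) := by field_simp

lemma resampling_error_le {c n S ψ A L₀ : ℝ} (hc₀ : 0 ≤ c) (hc : c ≤ 1 + 2 / n) (hn : 1 ≤ n)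
    (hS : 0 < S) (hψ : 1 ≤ ψ) (hA : A ≤ (ψ - 1) / S + 2 * ψ ^ 2 / (n * S))
    (hL₀ : (ψ - 1) / S ≤ L₀) :
    c * A - L₀ ≤ 8 * ψ ^ 2 / (n * S) := by
  set X := (ψ - 1) / S + 2 * ψ ^ 2 / (n * S) with hXdef
  have hX : 0 ≤ X := by
    have : 0 ≤ ψ - 1 := by linarith
    positivity
  have hcA : c * A ≤ (1 + 2 / n) * X :=
    (mul_le_mul_of_nonneg_left hA hc₀).trans (mul_le_mul_of_nonneg_right hc hX)
  have hexpand : (1 + 2 / n) * X - (ψ - 1) / S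
      = (2 * (ψ - 1) + 2 * ψ ^ 2 + 4 * ψ ^ 2 / n) / (n * S) := by
    rw [hXdef]
    field_simp
    ring
  have hnum : 2 * (ψ - 1) + 2 * ψ ^ 2 + 4 * ψ ^ 2 / n ≤ 8 * ψ ^ 2 := by
    have : 4 * ψ ^ 2 / n ≤ 4 * ψ ^ 2 := div_le_self (by positivity) hn
    nlinarith
  have : (2 * (ψ - 1) + 2 * ψ ^ 2 + 4 * ψ ^ 2 / n) / (n * S) ≤ 8 * ψ ^ 2 / (n * S) := by
    gcongr
  linarith

lemma gwRate_zero_mul_resampling_sub_le (hp₀ : 0 ≤ p 0) (hξ : ∀ j, 1 ≤ ξ j) (i : Fin N) :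
    gwRate p (ξ i) 0 * ((N : ℝ) / ((N : ℝ) - 1) * ((N : ℝ)⁻¹ * ∑ j, psiLin ξ (ξ i) (ξ j))
        - psiLin ξ (ξ i) 0)
      ≤ 8 * p 0 * psiFun N ξ ^ 2 / (N * totalMass ξ) := by
  have hN : 1 ≤ N := Fin.pos i
  have hS : 0 < totalMass ξ :=
    lt_of_lt_of_le (by exact_mod_cast hN) (card_le_totalMass ξ hξ)
  rw [gwRate_zero_right]
  split_ifs with hx
  · rw [show 8 * p 0 * psiFun N ξ ^ 2 / (N * totalMass ξ)
        = p 0 * (8 * psiFun N ξ ^ 2 / (N * totalMass ξ)) by ring]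
    refine mul_le_mul_of_nonneg_left ?_ hp₀
    rw [hx]
    exact resampling_error_le (natCast_div_natCast_sub_one_nonneg N)
      (natCast_div_natCast_sub_one_le N) (by exact_mod_cast hN) hS (one_le_psiFun ξ hξ hS)
      (avg_psiLin_one_le hξ hN) (le_psiLin_one_zero hS)
  · rw [zero_mul]
    positivity

lemma tsum_fvRate_mul_psiFun_update_sub_le (hp : OffspringLaw p σ v) (hξ : ∀ j, 1 ≤ ξ j)
    (i : Fin N) :
    ∑' y, fvRate p N ξ i y * (psiFun N (Function.update ξ i y) - psiFun N ξ)
      ≤ ξ i * (-v * ((2 * ξ i - psiFun N ξ) / totalMass ξ)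
          + jumpSecondMoment p * (1 / totalMass ξ + 2 * psiFun N ξ / totalMass ξ ^ 2))
        + 8 * p 0 * psiFun N ξ ^ 2 / (N * totalMass ξ) := by
  set ψ := psiFun N ξ
  have hupper := hasSum_fvRate_mul_centeredQuad hp hξ i ((2 * ξ i - ψ) / totalMass ξ)
    (1 / totalMass ξ + 2 * ψ / totalMass ξ ^ 2)
  have hlower := hasSum_fvRate_mul_centeredQuad hp hξ i 0 (-ψ)
  have hle : ∀ y, fvRate p N ξ i y * (psiFun N (Function.update ξ i y) - ψ)
      ≤ fvRate p N ξ i y * psiLin ξ (ξ i) y := by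
    intro y
    rcases Nat.eq_zero_or_pos y with rfl | (hy : 1 ≤ y)
    · simp [fvRate]
    by_cases hxy : ξ i ≤ y + 1
    · exact mul_le_mul_of_nonneg_left (psiFun_update_sub_le hξ i hy hxy)
        (fvRate_nonneg hp.nonneg i y)
    · rw [fvRate_eq_zero_of_add_one_lt (by omega), zero_mul, zero_mul]
  have hge : ∀ y, fvRate p N ξ i y * centeredQuad (ξ i) 0 (-ψ) y
      ≤ fvRate p N ξ i y * (psiFun N (Function.update ξ i y) - ψ) := fun y =>
    mul_le_mul_of_nonneg_left (neg_mul_sq_le_psiFun_update_sub i y) (fvRate_nonneg hp.nonneg i y)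
  have hsummable : Summable fun y => fvRate p N ξ i y * (psiFun N (Function.update ξ i y) - ψ) :=
    (((hupper.summable.sub hlower.summable).of_nonneg_of_le (fun y => sub_nonneg.2 (hge y))
      fun y => sub_le_sub_right (hle y) _).add hlower.summable).congr fun y => by ring
  exact (hasSum_le hle hsummable.hasSum hupper).trans
    (add_le_add le_rfl (gwRate_zero_mul_resampling_sub_le (hp.nonneg 0) hξ i))

end FlemingViot

/-- **The second-to-first moment ratio is a Lyapunov functional.**
There are positive constants `C₁, C₂`, independent of `N`, such that the
Fleming-Viot generator satisfies
`L^N ψ(ξ) ≤ -v ψ(ξ) + C₁ R²(ξ)/N + C₂`, where `v` is the subcritical drift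
of the driving Galton-Watson process. -/
theorem fv_generator_lyapunov_psi
    (p : ℕ → ℝ) (σ v : ℝ) (hp : OffspringLaw p σ v) :
    ∃ C₁ C₂ : ℝ, 0 < C₁ ∧ 0 < C₂ ∧
      ∀ N : ℕ, 1 ≤ N → ∀ ξ : Fin N → ℕ, (∀ i, 1 ≤ ξ i) →
        fvGen p N (psiFun N) ξ ≤
          -v * psiFun N ξ + C₁ * (rmax N ξ : ℝ) ^ 2 / (N : ℝ) + C₂ := by
  set M := jumpSecondMoment p
  have hM : 0 ≤ M := hp.jumpSecondMoment_nonneg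
  have hp₀ : 0 ≤ p 0 := hp.nonneg 0
  refine ⟨2 * M + 8 * p 0 + 1, M + 1, by positivity, by positivity, fun N hN ξ hξ => ?_⟩
  set S := totalMass ξ with hSdef
  set ψ := psiFun N ξ with hψdef
  have hN' : (0 : ℝ) < N := by exact_mod_cast hN
  have hS : 0 < S := lt_of_lt_of_le hN' (card_le_totalMass ξ hξ)
  have hψ : 1 ≤ ψ := one_le_psiFun ξ hξ hS
  have hquad : ψ ^ 2 / S ≤ (rmax N ξ : ℝ) ^ 2 / N := psiFun_sq_div_totalMass_le ξ hξ hN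
  have hlin : ψ / S ≤ ψ ^ 2 / S := by gcongr; nlinarith
  calc fvGen p N (psiFun N) ξ
      ≤ ∑ i, ((ξ i : ℝ) * (-v * ((2 * ξ i - ψ) / S) + M * (1 / S + 2 * ψ / S ^ 2))
          + 8 * p 0 * ψ ^ 2 / (N * S)) := by
        rw [fvGen_eq]
        exact Finset.sum_le_sum fun i _ => tsum_fvRate_mul_psiFun_update_sub_le hp hξ i
    _ = -v * ψ + M + 2 * M * (ψ / S) + 8 * p 0 * (ψ ^ 2 / S) := by
        rw [Finset.sum_add_distrib, sum_mul_psiLin_coeffs ξ hS.ne', Finset.sum_const,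
          Finset.card_univ, Fintype.card_fin, nsmul_eq_mul, ← hSdef, ← hψdef]
        field_simp
        ring
    _ ≤ -v * ψ + (2 * M + 8 * p 0 + 1) * (rmax N ξ : ℝ) ^ 2 / N + (M + 1) := by
        rw [mul_div_assoc]
        have : 0 ≤ (rmax N ξ : ℝ) ^ 2 / N := by positivity
        nlinarith

end
end

section
/- Let {μ_n^γ : n ∈ ℕ, γ ∈ Γ} be a family of probability measures on ℕ and ν a probability measure on ℕ. If for each z ∈ [0,1] one has lim_{n→∞} sup_{γ∈Γ} |G(μ_n^γ; z) − G(ν; z)| = 0, then for each x ∈ ℕ, lim_{n→∞} sup_{γ∈Γ} |μ_n^γ(x) − ν(x)| = 0. -/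
/-! Induct on `x`. For `0 ≤ z ≤ 1` the tail `∑_{y > x} μ(y) z^y` of a probability is at most
`z^(x+1)`, so `(μ(x) - ν(x)) z^x` differs from `G(μ; z) - G(ν; z)` by the lower-order terms,
uniformly small by induction, and by two tails of size at most `z^(x+1)`. Dividing by `z^x`
bounds `|μ(x) - ν(x)|` by a uniformly vanishing quantity plus `2 z`, and `z` can be taken small. -/

open MeasureTheory Filter Topology Set

noncomputable section

theorem summable_of_tsum_ne_zero {ι : Type*} {f : ι → ℝ} (h : ∑' i, f i ≠ 0) : Summable f :=
  by_contra fun hf => h (tsum_eq_zero_of_not_summable hf)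

section GeneratingFunction

variable {μ ν : ℕ → ℝ} {z : ℝ}

theorem summable_mul_pow (hμ0 : ∀ x, 0 ≤ μ x) (hμ : Summable μ) (hz0 : 0 ≤ z) (hz1 : z ≤ 1) :
    Summable fun x => μ x * z ^ x :=
  hμ.of_nonneg_of_le (fun x => mul_nonneg (hμ0 x) (pow_nonneg hz0 x))
    fun x => mul_le_of_le_one_right (hμ0 x) (pow_le_one₀ hz0 hz1)

theorem abs_genFn_sub_sum_range_le (hμ0 : ∀ x, 0 ≤ μ x) (hμ1 : ∑' x, μ x = 1)
    (hz0 : 0 ≤ z) (hz1 : z ≤ 1) (k : ℕ) :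
    |genFn μ z - ∑ x ∈ Finset.range k, μ x * z ^ x| ≤ z ^ k := by
  have hμ : Summable μ := summable_of_tsum_ne_zero (by simp [hμ1])
  have htail : genFn μ z - ∑ x ∈ Finset.range k, μ x * z ^ x
      = ∑' x, μ (x + k) * z ^ (x + k) := by
    rw [genFn, ← (summable_mul_pow hμ0 hμ hz0 hz1).sum_add_tsum_nat_add k, add_sub_cancel_left]
  have hμk : Summable fun x => μ (x + k) := (summable_nat_add_iff k).2 hμ
  rw [htail, abs_of_nonneg (tsum_nonneg fun x => mul_nonneg (hμ0 _) (pow_nonneg hz0 _))]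
  calc ∑' x, μ (x + k) * z ^ (x + k)
      ≤ ∑' x, μ (x + k) * z ^ k :=
        ((summable_nat_add_iff k).2 (summable_mul_pow hμ0 hμ hz0 hz1)).tsum_le_tsum
          (fun x => mul_le_mul_of_nonneg_left
            (pow_le_pow_of_le_one hz0 hz1 (Nat.le_add_left k x)) (hμ0 _))
          (hμk.mul_right _)
    _ = (∑' x, μ (x + k)) * z ^ k := tsum_mul_right
    _ ≤ 1 * z ^ k := by
        refine mul_le_mul_of_nonneg_right ?_ (pow_nonneg hz0 k)
        rw [← hμ1, ← hμ.sum_add_tsum_nat_add k]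
        exact le_add_of_nonneg_left (Finset.sum_nonneg fun x _ => hμ0 x)
    _ = z ^ k := one_mul _

theorem abs_sub_mul_pow_le (hμ0 : ∀ x, 0 ≤ μ x) (hμ1 : ∑' x, μ x = 1)
    (hν0 : ∀ x, 0 ≤ ν x) (hν1 : ∑' x, ν x = 1) (hz0 : 0 ≤ z) (hz1 : z ≤ 1) (x : ℕ) :
    |μ x - ν x| * z ^ x ≤ |genFn μ z - genFn ν z|
      + ∑ y ∈ Finset.range x, |μ y - ν y| + 2 * z ^ (x + 1) := by
  set S : (ℕ → ℝ) → ℝ := fun ρ => ∑ y ∈ Finset.range x, ρ y * z ^ y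
  have hsplit : (μ x - ν x) * z ^ x = (genFn μ z - genFn ν z) - (S μ - S ν)
      - ((genFn μ z - (S μ + μ x * z ^ x)) - (genFn ν z - (S ν + ν x * z ^ x))) := by ring
  have hS : |S μ - S ν| ≤ ∑ y ∈ Finset.range x, |μ y - ν y| := by
    rw [← Finset.sum_sub_distrib]
    refine (Finset.abs_sum_le_sum_abs _ _).trans (Finset.sum_le_sum fun y _ => ?_)
    rw [← sub_mul, abs_mul, abs_of_nonneg (pow_nonneg hz0 y)]
    exact mul_le_of_le_one_right (abs_nonneg _) (pow_le_one₀ hz0 hz1)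
  have hμx := abs_genFn_sub_sum_range_le hμ0 hμ1 hz0 hz1 (x + 1)
  have hνx := abs_genFn_sub_sum_range_le hν0 hν1 hz0 hz1 (x + 1)
  rw [Finset.sum_range_succ] at hμx hνx
  rw [← abs_of_nonneg (pow_nonneg hz0 x), ← abs_mul, hsplit]
  calc _ ≤ |genFn μ z - genFn ν z| + |S μ - S ν|
        + (|genFn μ z - (S μ + μ x * z ^ x)| + |genFn ν z - (S ν + ν x * z ^ x)|) :=
        (abs_sub _ _).trans (add_le_add (abs_sub _ _) (abs_sub _ _))
    _ ≤ _ := by linarith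

theorem abs_sub_le_of_abs_genFn_sub_le (hμ0 : ∀ x, 0 ≤ μ x) (hμ1 : ∑' x, μ x = 1)
    (hν0 : ∀ x, 0 ≤ ν x) (hν1 : ∑' x, ν x = 1) (hz0 : 0 < z) (hz1 : z ≤ 1) {x : ℕ} {η : ℝ}
    (hG : |genFn μ z - genFn ν z| ≤ η) (hprev : ∀ y < x, |μ y - ν y| ≤ η) :
    |μ x - ν x| ≤ (x + 1) * η / z ^ x + 2 * z := by
  have hsum : ∑ y ∈ Finset.range x, |μ y - ν y| ≤ x * η := by
    simpa using Finset.sum_le_card_nsmul _ _ η fun y hy => hprev y (Finset.mem_range.1 hy)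
  have key := abs_sub_mul_pow_le hμ0 hμ1 hν0 hν1 hz0.le hz1 x
  have hzx : 0 < z ^ x := pow_pos hz0 x
  rw [div_add' _ _ _ hzx.ne', le_div_iff₀ hzx]
  linarith [pow_succ' z x]

end GeneratingFunction

/-- **Uniform convergence of generating functions implies uniform pointwise
convergence.** If `sup_γ |G(μₙ^γ; z) - G(ν; z)| → 0` for every `z ∈ [0,1]`,
then `sup_γ |μₙ^γ(x) - ν(x)| → 0` for every `x`. -/
theorem uniform_pointwise_from_generating_functions
    {Γ : Type*} (μ : ℕ → Γ → ℕ → ℝ) (ν : ℕ → ℝ)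
    (hμ : ∀ n γ, IsProbOnPos (μ n γ)) (hν : IsProbOnPos ν)
    (h : ∀ z ∈ Set.Icc (0:ℝ) 1, ∀ ε : ℝ, 0 < ε →
      ∃ n₀ : ℕ, ∀ n : ℕ, n₀ ≤ n → ∀ γ : Γ, |genFn (μ n γ) z - genFn ν z| ≤ ε) :
    ∀ x : ℕ, ∀ ε : ℝ, 0 < ε →
      ∃ n₀ : ℕ, ∀ n : ℕ, n₀ ≤ n → ∀ γ : Γ, |μ n γ x - ν x| ≤ ε := by
  simp_rw [← eventually_atTop] at h ⊢
  intro x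
  induction x using Nat.strong_induction_on with
  | _ x ih =>
  intro ε hε
  set z := min (ε / 4) 1
  have hz0 : 0 < z := lt_min (by linarith) one_pos
  have hzε : 2 * z ≤ ε / 2 := by linarith [min_le_left (ε / 4) 1]
  set η := ε / 2 * z ^ x / (x + 1)
  have hη : 0 < η := by positivity
  have hprev : ∀ᶠ n in atTop, ∀ y ∈ Finset.range x, ∀ γ, |μ n γ y - ν y| ≤ η :=
    (eventually_all_finset _).2 fun y hy => ih y (Finset.mem_range.1 hy) η hη
  filter_upwards [h z ⟨hz0.le, min_le_right _ _⟩ η hη, hprev] with n hGn hprevn γ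
  have hbound := abs_sub_le_of_abs_genFn_sub_le (hμ n γ).1 (hμ n γ).2.2 hν.1 hν.2.2 hz0
    (min_le_right _ _) (hGn γ) fun y hy => hprevn y (Finset.mem_range.2 hy) γ
  have hηx : (x + 1) * η / z ^ x = ε / 2 := by
    simp only [η]
    field_simp
  linarith

end
end
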